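/- arXiv:2305.07249 — 7 statements merged into one kernel-verified Lean document; each statement's English description precedes it below -/
import Mathlib

section
/- Let n ≥ 1 be an integer, let x ∈ ℝⁿ, and let λ be a real number with 0 < λ < √(1 + |x|²). Then for every z ∈ ℝⁿ with |z − x| > λ one has λ²(1 + |z|²) < |z − x|²(1 + |z^{x,λ}|²); equivalently, L(x,λ,z) := λ²(1 + |z|²) / (|z − x|²(1 + |z^{x,λ}|²)) < 1. -/
/-- Inversion of `z` in the sphere of radius `l` centered at `x`. -/
noncomputable def sphereInversion {n : ℕ} (x : EuclideanSpace ℝ (Fin n)) (l : ℝ)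
    (ξ : EuclideanSpace ℝ (Fin n)) : EuclideanSpace ℝ (Fin n) :=
  x + (l ^ 2 / ‖ξ - x‖ ^ 2) • (ξ - x)

/-!
With `w = z - x` and `c = λ²/|w|²`, expanding `|x + w|²` and `|x + c w|²` shows that
`|w|²(1 + |z^{x,λ}|²) - λ²(1 + |z|²)` factors as `(|w|² - λ²)(1 + |x|² - λ²)`.
Both factors are positive exactly under the hypotheses `λ < |z - x|` and `λ² < 1 + |x|²`.
-/

theorem norm_sub_sq_mul_one_add_norm_inversion_sq_sub
    {E : Type*} [NormedAddCommGroup E] [InnerProductSpace ℝ E] (x z : E) (l : ℝ) (hzx : z ≠ x) :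
    ‖z - x‖ ^ 2 * (1 + ‖x + (l ^ 2 / ‖z - x‖ ^ 2) • (z - x)‖ ^ 2) - l ^ 2 * (1 + ‖z‖ ^ 2)
      = (‖z - x‖ ^ 2 - l ^ 2) * (1 + ‖x‖ ^ 2 - l ^ 2) := by
  set w := z - x
  have hw : ‖w‖ ≠ 0 := norm_ne_zero_iff.mpr (sub_ne_zero.mpr hzx)
  have hz : ‖z‖ ^ 2 = ‖x‖ ^ 2 + 2 * inner ℝ x w + ‖w‖ ^ 2 := by
    rw [← norm_add_sq_real, add_sub_cancel]
  have hinv : ‖x + (l ^ 2 / ‖w‖ ^ 2) • w‖ ^ 2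
      = ‖x‖ ^ 2 + 2 * (l ^ 2 / ‖w‖ ^ 2) * inner ℝ x w + (l ^ 2 / ‖w‖ ^ 2) ^ 2 * ‖w‖ ^ 2 := by
    rw [norm_add_sq_real, real_inner_smul_right, norm_smul, Real.norm_eq_abs,
      abs_of_nonneg (by positivity)]
    ring
  rw [hz, hinv]
  field_simp
  ring

theorem stmt_5_general (n : ℕ) (x : EuclideanSpace ℝ (Fin n)) (l : ℝ)
    (hl : 0 < l) (hl' : l < Real.sqrt (1 + ‖x‖ ^ 2)) :
    ∀ z : EuclideanSpace ℝ (Fin n), l < ‖z - x‖ →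
      l ^ 2 * (1 + ‖z‖ ^ 2) < ‖z - x‖ ^ 2 * (1 + ‖sphereInversion x l z‖ ^ 2)
        ∧ l ^ 2 * (1 + ‖z‖ ^ 2) / (‖z - x‖ ^ 2 * (1 + ‖sphereInversion x l z‖ ^ 2)) < 1 := by
  intro z hz
  have hzx : z ≠ x := sub_ne_zero.mp (norm_pos_iff.mp (hl.trans hz))
  have hlz : l ^ 2 < ‖z - x‖ ^ 2 := pow_lt_pow_left₀ hz hl.le two_ne_zero
  have hlx : l ^ 2 < 1 + ‖x‖ ^ 2 := (Real.lt_sqrt hl.le).mp hl'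
  have key : l ^ 2 * (1 + ‖z‖ ^ 2) < ‖z - x‖ ^ 2 * (1 + ‖sphereInversion x l z‖ ^ 2) := by
    have := norm_sub_sq_mul_one_add_norm_inversion_sq_sub x z l hzx
    rw [← sub_pos, sphereInversion, this]
    exact mul_pos (sub_pos.mpr hlz) (sub_pos.mpr hlx)
  exact ⟨key, (div_lt_one (mul_pos ((sq_nonneg l).trans_lt hlz) (by positivity))).mpr key⟩

/-- for `0 < λ < √(1 + |x|²)` and `|z − x| > λ`, one has
    `λ²(1 + |z|²) < |z − x|²(1 + |z^{x,λ}|²)`, i.e. `L(x,λ,z) < 1`. -/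
theorem stmt_5 (n : ℕ) (hn : 1 ≤ n) (x : EuclideanSpace ℝ (Fin n)) (l : ℝ)
    (hl : 0 < l) (hl' : l < Real.sqrt (1 + ‖x‖ ^ 2)) :
    ∀ z : EuclideanSpace ℝ (Fin n), l < ‖z - x‖ →
      l ^ 2 * (1 + ‖z‖ ^ 2) < ‖z - x‖ ^ 2 * (1 + ‖sphereInversion x l z‖ ^ 2)
        ∧ l ^ 2 * (1 + ‖z‖ ^ 2) / (‖z - x‖ ^ 2 * (1 + ‖sphereInversion x l z‖ ^ 2)) < 1 :=
  stmt_5_general n x l hl hl'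
end

section
/- Let u be a positive continuous solution of the integral equation (IE). Then for every x ∈ ℝⁿ, every λ > 0, and every ξ ∈ ℝⁿ with ξ ≠ x, the Kelvin transform u_{x,λ} satisfies u_{x,λ}(ξ) = γ ∫_{ℝⁿ} |ξ − z|^{2s−n} [ ε (2λ²/(1 + |z^{x,λ}|²))^{2s} |z − x|^{−4s} u_{x,λ}(z) + (2λ²/(1 + |z^{x,λ}|²))^{σ} |z − x|^{−2σ} u_{x,λ}(z)^{α} ] dz, where the integral is taken over z ∈ ℝⁿ \ {x} and the integrand is Lebesgue integrable. -/
/-! Substitute `y = z^{x,λ}` in the equation for `u` at `ξ^{x,λ}`. Inversion is an involution of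
`ℝⁿ ∖ {x}` with Jacobian `(λ/|z-x|)^{2n}`, and `|ξ^{x,λ} - z^{x,λ}| = λ²|ξ-z|/(|ξ-x||z-x|)`.
Writing `u(z^{x,λ}) = (|z-x|/λ)^{n-2s} u_{x,λ}(z)`, all powers of `λ` and `|z-x|` collect into
the weights of the transformed equation; for the nonlinear term this is where
`σ = (n+2s)/2 - α(n-2s)/2` enters. -/

open MeasureTheory

/-- The Kelvin transform `u_{x,λ}` of `u` (with exponent `n − 2s`). -/
noncomputable def kelvin {n : ℕ} (s : ℝ) (u : EuclideanSpace ℝ (Fin n) → ℝ)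
    (x : EuclideanSpace ℝ (Fin n)) (l : ℝ) (ξ : EuclideanSpace ℝ (Fin n)) : ℝ :=
  (l / ‖ξ - x‖) ^ ((n : ℝ) - 2 * s) * u (sphereInversion x l ξ)

/-- The nonlinearity `F_{ε,u}(y) = ε (2/(1+|y|²))^{2s} u(y) + (2/(1+|y|²))^{σ} u(y)^{α}`. -/
noncomputable def ieF {n : ℕ} (s σ α ε : ℝ) (u : EuclideanSpace ℝ (Fin n) → ℝ)
    (y : EuclideanSpace ℝ (Fin n)) : ℝ :=
  ε * (2 / (1 + ‖y‖ ^ 2)) ^ (2 * s) * u y + (2 / (1 + ‖y‖ ^ 2)) ^ σ * u y ^ α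

/-- `u` is a positive continuous solution of the integral equation (IE). -/
def IsIESolution {n : ℕ} (s σ α ε γ : ℝ) (u : EuclideanSpace ℝ (Fin n) → ℝ) : Prop :=
  Continuous u ∧ (∀ y, 0 < u y) ∧
    ∀ x : EuclideanSpace ℝ (Fin n),
      Integrable (fun y => ‖x - y‖ ^ (2 * s - (n : ℝ)) * ieF s σ α ε u y) ∧
      u x = γ * ∫ y, ‖x - y‖ ^ (2 * s - (n : ℝ)) * ieF s σ α ε u y

namespace EuclideanGeometry

variable {F : Type*} [NormedAddCommGroup F] [InnerProductSpace ℝ F]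

theorem image_inversion_compl_singleton (c : F) {R : ℝ} (hR : R ≠ 0) :
    inversion c R '' {c}ᶜ = {c}ᶜ := by
  rw [Set.image_eq_preimage_of_inverse (inversion_involutive c hR) (inversion_involutive c hR)]
  ext z
  simp [inversion_eq_center hR]

theorem abs_det_fderiv_inversion [FiniteDimensional ℝ F] (c z : F) (R : ℝ) :
    |((R / dist z c) ^ 2 • ((ℝ ∙ (z - c))ᗮ.reflection : F →L[ℝ] F)).det|
      = (R / dist z c) ^ (2 * Module.finrank ℝ F) := by
  have hrefl : |((ℝ ∙ (z - c))ᗮ.reflection : F →L[ℝ] F).det| = 1 := by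
    change |LinearMap.det (ℝ ∙ (z - c))ᗮ.reflection.toLinearMap| = 1
    rw [Submodule.det_reflection, abs_pow, abs_neg, abs_one, one_pow]
  rw [ContinuousLinearMap.det, ContinuousLinearMap.toLinearMap_smul, LinearMap.det_smul,
    abs_mul, ← ContinuousLinearMap.det, hrefl, mul_one, abs_pow, abs_sq, pow_mul]

variable [FiniteDimensional ℝ F] [MeasurableSpace F] [BorelSpace F] [Nontrivial F]
  (μ : Measure F) [μ.IsAddHaarMeasure] {G : Type*} [NormedAddCommGroup G] [NormedSpace ℝ G]

theorem integrable_iff_integrableOn_comp_inversion (c : F) {R : ℝ} (hR : R ≠ 0) (g : F → G) :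
    Integrable g μ ↔ IntegrableOn
      (fun z ↦ (R / dist z c) ^ (2 * Module.finrank ℝ F) • g (inversion c R z)) {c}ᶜ μ := by
  have h := integrableOn_image_iff_integrableOn_abs_det_fderiv_smul μ
    (measurableSet_singleton c).compl
    (fun z hz ↦ (hasFDerivAt_inversion (R := R) hz).hasFDerivWithinAt)
    ((inversion_injective c hR).injOn) g
  simpa only [image_inversion_compl_singleton c hR, abs_det_fderiv_inversion, IntegrableOn,
    restrict_compl_singleton] using h

theorem integral_eq_setIntegral_comp_inversion [CompleteSpace G] (c : F) {R : ℝ} (hR : R ≠ 0)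
    (g : F → G) :
    ∫ y, g y ∂μ
      = ∫ z in {c}ᶜ, (R / dist z c) ^ (2 * Module.finrank ℝ F) • g (inversion c R z) ∂μ := by
  have h := integral_image_eq_integral_abs_det_fderiv_smul μ
    (measurableSet_singleton c).compl
    (fun z hz ↦ (hasFDerivAt_inversion (R := R) hz).hasFDerivWithinAt)
    ((inversion_injective c hR).injOn) g
  simpa only [image_inversion_compl_singleton c hR, abs_det_fderiv_inversion,
    restrict_compl_singleton] using h

end EuclideanGeometry

open EuclideanGeometry

theorem sphereInversion_eq_inversion {n : ℕ} (x : EuclideanSpace ℝ (Fin n)) (l : ℝ) :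
    sphereInversion x l = inversion x l := by
  funext ξ
  simp only [sphereInversion, inversion, vsub_eq_sub, vadd_eq_add, dist_eq_norm, div_pow,
    add_comm]

/-- The power bookkeeping of the substitution, with `d = |z-x|`, `r = |ξ-x|`, `t = |ξ-z|`,
`q = 1 + |z^{x,λ}|²`; the weight exponent `a` is `2s` for the linear and `σ` for the nonlinear
term. -/
theorem rpow_weight_sphereInversion (n : ℕ) {s a l d r t q : ℝ} (hl : 0 < l) (hd : 0 < d)
    (hr : 0 < r) (ht : 0 < t) (hq : 0 < q) :
    (l / d) ^ (2 * n) * (l ^ 2 / (r * d) * t) ^ (2 * s - n) * (2 / q) ^ a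
        * (d / l) ^ (n + 2 * s - 2 * a)
      = (r / l) ^ ((n : ℝ) - 2 * s) * t ^ (2 * s - n) * (2 * l ^ 2 / q) ^ a * d ^ (-(2 * a)) := by
  rw [← Real.rpow_natCast, Real.rpow_def_of_pos (by positivity),
    Real.rpow_def_of_pos (by positivity), Real.rpow_def_of_pos (by positivity),
    Real.rpow_def_of_pos (by positivity), Real.rpow_def_of_pos (by positivity),
    Real.rpow_def_of_pos ht, Real.rpow_def_of_pos (by positivity), Real.rpow_def_of_pos hd]
  simp only [← Real.exp_add]
  congr 1
  rw [Real.log_div hl.ne' hd.ne', Real.log_mul (by positivity) ht.ne',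
    Real.log_div (by positivity) (by positivity), Real.log_mul hr.ne' hd.ne', Real.log_pow,
    Real.log_div two_ne_zero hq.ne', Real.log_div hd.ne' hl.ne', Real.log_div hr.ne' hl.ne',
    Real.log_div (by positivity) hq.ne', Real.log_mul two_ne_zero (by positivity), Real.log_pow]
  push_cast
  ring

section Kelvin

variable {n : ℕ} {s σ α ε : ℝ} {u : EuclideanSpace ℝ (Fin n) → ℝ}
  {x ξ z : EuclideanSpace ℝ (Fin n)} {l : ℝ}

theorem kelvin_pos (hu : ∀ y, 0 < u y) (hl : 0 < l) (hz : z ≠ x) : 0 < kelvin s u x l z := by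
  have : 0 < ‖z - x‖ := norm_pos_iff.2 (sub_ne_zero.2 hz)
  exact mul_pos (Real.rpow_pos_of_pos (by positivity) _) (hu _)

theorem apply_sphereInversion_eq_mul_kelvin (hl : 0 < l) (hz : z ≠ x) :
    u (sphereInversion x l z) = (‖z - x‖ / l) ^ ((n : ℝ) - 2 * s) * kelvin s u x l z := by
  have : 0 < ‖z - x‖ := norm_pos_iff.2 (sub_ne_zero.2 hz)
  rw [kelvin, ← mul_assoc, ← Real.mul_rpow (by positivity) (by positivity),
    show ‖z - x‖ / l * (l / ‖z - x‖) = 1 by field_simp, Real.one_rpow, one_mul]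

noncomputable def kelvinIeF (s σ α ε : ℝ) (u : EuclideanSpace ℝ (Fin n) → ℝ)
    (x : EuclideanSpace ℝ (Fin n)) (l : ℝ) (z : EuclideanSpace ℝ (Fin n)) : ℝ :=
  ε * (2 * l ^ 2 / (1 + ‖sphereInversion x l z‖ ^ 2)) ^ (2 * s) * ‖z - x‖ ^ (-(4 * s))
      * kelvin s u x l z
    + (2 * l ^ 2 / (1 + ‖sphereInversion x l z‖ ^ 2)) ^ σ * ‖z - x‖ ^ (-(2 * σ))
      * kelvin s u x l z ^ α

theorem jacobian_mul_kernel_ieF_sphereInversion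
    (hσ : σ = ((n : ℝ) + 2 * s) / 2 - α * ((n : ℝ) - 2 * s) / 2) (hu : ∀ y, 0 < u y)
    (hl : 0 < l) (hξ : ξ ≠ x) (hz : z ≠ x) (hzξ : z ≠ ξ) :
    (l / dist z x) ^ (2 * n) * (‖sphereInversion x l ξ - sphereInversion x l z‖ ^ (2 * s - n)
        * ieF s σ α ε u (sphereInversion x l z))
      = (‖ξ - x‖ / l) ^ ((n : ℝ) - 2 * s)
        * (‖ξ - z‖ ^ (2 * s - n) * kelvinIeF s σ α ε u x l z) := by
  have hd : 0 < ‖z - x‖ := norm_pos_iff.2 (sub_ne_zero.2 hz)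
  have hr : 0 < ‖ξ - x‖ := norm_pos_iff.2 (sub_ne_zero.2 hξ)
  have ht : 0 < ‖ξ - z‖ := norm_pos_iff.2 (sub_ne_zero.2 hzξ.symm)
  have hK := kelvin_pos (s := s) hu hl hz
  have hdist : ‖sphereInversion x l ξ - sphereInversion x l z‖
      = l ^ 2 / (‖ξ - x‖ * ‖z - x‖) * ‖ξ - z‖ := by
    simp only [sphereInversion_eq_inversion, ← dist_eq_norm]
    exact dist_inversion_inversion hξ hz l
  have hweight (a : ℝ) := rpow_weight_sphereInversion n (s := s) (a := a) hl hd hr ht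
    (show 0 < 1 + ‖sphereInversion x l z‖ ^ 2 by positivity)
  have hweight_lin := hweight (2 * s)
  rw [show n + 2 * s - 2 * (2 * s) = (n : ℝ) - 2 * s by ring,
    show -(2 * (2 * s)) = -(4 * s) by ring] at hweight_lin
  have hσ' : (n : ℝ) + 2 * s - 2 * σ = ((n : ℝ) - 2 * s) * α := by rw [hσ]; ring
  rw [ieF, kelvinIeF, dist_eq_norm, hdist,
    apply_sphereInversion_eq_mul_kelvin (u := u) (s := s) hl hz,
    Real.mul_rpow (by positivity) hK.le, ← Real.rpow_mul (by positivity), ← hσ']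
  linear_combination (ε * kelvin s u x l z) * hweight_lin
    + kelvin s u x l z ^ α * hweight σ

end Kelvin

theorem stmt_6_general (n : ℕ) (s α ε γ σ : ℝ)
    (hσ : σ = ((n : ℝ) + 2 * s) / 2 - α * ((n : ℝ) - 2 * s) / 2)
    (u : EuclideanSpace ℝ (Fin n) → ℝ) (hu : IsIESolution s σ α ε γ u)
    (x : EuclideanSpace ℝ (Fin n)) (l : ℝ) (hl : 0 < l)
    (ξ : EuclideanSpace ℝ (Fin n)) (hξ : ξ ≠ x) :
    IntegrableOn
      (fun z => ‖ξ - z‖ ^ (2 * s - (n : ℝ)) *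
        (ε * (2 * l ^ 2 / (1 + ‖sphereInversion x l z‖ ^ 2)) ^ (2 * s)
            * ‖z - x‖ ^ (-(4 * s)) * kelvin s u x l z
          + (2 * l ^ 2 / (1 + ‖sphereInversion x l z‖ ^ 2)) ^ σ
            * ‖z - x‖ ^ (-(2 * σ)) * kelvin s u x l z ^ α))
      {x}ᶜ ∧
    kelvin s u x l ξ
      = γ * ∫ z in ({x}ᶜ : Set (EuclideanSpace ℝ (Fin n))),
          ‖ξ - z‖ ^ (2 * s - (n : ℝ)) *
            (ε * (2 * l ^ 2 / (1 + ‖sphereInversion x l z‖ ^ 2)) ^ (2 * s)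
                * ‖z - x‖ ^ (-(4 * s)) * kelvin s u x l z
              + (2 * l ^ 2 / (1 + ‖sphereInversion x l z‖ ^ 2)) ^ σ
                * ‖z - x‖ ^ (-(2 * σ)) * kelvin s u x l z ^ α) := by
  obtain ⟨-, hupos, hsol⟩ := hu
  have : Nontrivial (EuclideanSpace ℝ (Fin n)) := nontrivial_of_ne ξ x hξ
  obtain ⟨hint, hval⟩ := hsol (sphereInversion x l ξ)
  rw [integrable_iff_integrableOn_comp_inversion volume x hl.ne'] at hint
  rw [integral_eq_setIntegral_comp_inversion volume x hl.ne'] at hval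
  have hrl : 0 < ‖ξ - x‖ / l := div_pos (norm_pos_iff.2 (sub_ne_zero.2 hξ)) hl
  set c := (‖ξ - x‖ / l) ^ ((n : ℝ) - 2 * s)
  have hc : 0 < c := Real.rpow_pos_of_pos hrl _
  have hae : (fun z ↦ (l / dist z x) ^ (2 * Module.finrank ℝ (EuclideanSpace ℝ (Fin n))) •
        (‖sphereInversion x l ξ - inversion x l z‖ ^ (2 * s - n) * ieF s σ α ε u (inversion x l z)))
      =ᵐ[volume.restrict {x}ᶜ] fun z ↦ c * (‖ξ - z‖ ^ (2 * s - n) * kelvinIeF s σ α ε u x l z) := by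
    filter_upwards [self_mem_ae_restrict (measurableSet_singleton x).compl,
      ae_restrict_of_ae (volume.ae_ne ξ)] with z hzx hzξ
    rw [finrank_euclideanSpace_fin, smul_eq_mul, ← sphereInversion_eq_inversion]
    exact jacobian_mul_kernel_ieF_sphereInversion hσ hupos hl hξ hzx hzξ
  rw [integral_congr_ae hae, integral_const_mul] at hval
  refine ⟨(integrable_const_mul_iff hc.ne'.isUnit _).1 (hint.congr_fun_ae hae), ?_⟩
  rw [kelvin, hval, ← inv_div, Real.inv_rpow hrl.le, mul_left_comm, inv_mul_cancel_left₀ hc.ne']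
  rfl

/-- the integral identity satisfied by the Kelvin transform of a solution
    of (IE). -/
theorem stmt_6 (n : ℕ) (s α ε γ σ : ℝ)
    (hs : 0 < 2 * s) (hns : 2 * s < (n : ℝ))
    (hα : 0 < α) (hα' : α ≤ ((n : ℝ) + 2 * s) / ((n : ℝ) - 2 * s))
    (hε : 0 ≤ ε) (hγ : 0 < γ)
    (hσ : σ = ((n : ℝ) + 2 * s) / 2 - α * ((n : ℝ) - 2 * s) / 2)
    (u : EuclideanSpace ℝ (Fin n) → ℝ) (hu : IsIESolution s σ α ε γ u)
    (x : EuclideanSpace ℝ (Fin n)) (l : ℝ) (hl : 0 < l)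
    (ξ : EuclideanSpace ℝ (Fin n)) (hξ : ξ ≠ x) :
    IntegrableOn
      (fun z => ‖ξ - z‖ ^ (2 * s - (n : ℝ)) *
        (ε * (2 * l ^ 2 / (1 + ‖sphereInversion x l z‖ ^ 2)) ^ (2 * s)
            * ‖z - x‖ ^ (-(4 * s)) * kelvin s u x l z
          + (2 * l ^ 2 / (1 + ‖sphereInversion x l z‖ ^ 2)) ^ σ
            * ‖z - x‖ ^ (-(2 * σ)) * kelvin s u x l z ^ α))
      {x}ᶜ ∧
    kelvin s u x l ξ
      = γ * ∫ z in ({x}ᶜ : Set (EuclideanSpace ℝ (Fin n))),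
          ‖ξ - z‖ ^ (2 * s - (n : ℝ)) *
            (ε * (2 * l ^ 2 / (1 + ‖sphereInversion x l z‖ ^ 2)) ^ (2 * s)
                * ‖z - x‖ ^ (-(4 * s)) * kelvin s u x l z
              + (2 * l ^ 2 / (1 + ‖sphereInversion x l z‖ ^ 2)) ^ σ
                * ‖z - x‖ ^ (-(2 * σ)) * kelvin s u x l z ^ α) :=
  stmt_6_general n s α ε γ σ hσ u hu x l hl ξ hξ
end

section
/- Let u be a positive solution of the integral equation (IE) which is continuously differentiable on ℝⁿ, such that sup_{ℝⁿ} |∇(log u)| < ∞ and liminf_{|y|→∞} |y|^{n−2s} u(y) > 0. Then for every x ∈ ℝⁿ there exists λ₀ > 0 such that for every λ with 0 < λ < λ₀ and every y ∈ ℝⁿ with |y − x| ≥ λ one has u_{x,λ}(y) ≤ u(y). -/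
open MeasureTheory Filter

/-! Write `ρ = ‖y - x‖` and `q = λ / ρ`. For `ρ ≤ (n - 2s) / (2M)`, where `M` bounds `|∇ log u|`,
the inverted point lies at distance `ρ (1 - q²)` from `y`, so `u_{x,λ}(y) / u(y)` is at most
`q^{n-2s} e^{(n-2s)(1-q²)/2} ≤ 1` because `log q² ≤ q² - 1`. Beyond that radius,
`ρ^{n-2s} u(y)` is bounded below by a positive constant (compactness plus the `liminf` at
infinity) while `u` is bounded on the ball containing the inverted points, so
`u_{x,λ}(y) ≤ λ^{n-2s} sup u / ρ^{n-2s} ≤ u(y)` once `λ` is small. -/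

open Real Metric Bornology Topology

lemma le_mul_exp_of_norm_gradient_log_le {E : Type*} [NormedAddCommGroup E]
    [InnerProductSpace ℝ E] [CompleteSpace E] {u : E → ℝ} {M : ℝ}
    (hu : Differentiable ℝ u) (hpos : ∀ y, 0 < u y)
    (hM : ∀ y, ‖gradient (fun w => log (u w)) y‖ ≤ M) (a b : E) :
    u a ≤ u b * exp (M * ‖a - b‖) := by
  have hdiff : Differentiable ℝ fun w => log (u w) := fun y => (hu y).log (hpos y).ne'
  have hfderiv : ∀ y, ‖fderiv ℝ (fun w => log (u w)) y‖ ≤ M := fun y => by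
    simpa only [gradient, LinearIsometryEquiv.norm_map] using hM y
  have hlog : ‖log (u a) - log (u b)‖ ≤ M * ‖a - b‖ :=
    convex_univ.norm_image_sub_le_of_norm_fderiv_le (fun y _ => hdiff y) (fun y _ => hfderiv y)
      (Set.mem_univ b) (Set.mem_univ a)
  rw [Real.norm_eq_abs] at hlog
  rw [← exp_log (hpos a), ← exp_log (hpos b), ← exp_add, exp_le_exp]
  linarith [le_abs_self (log (u a) - log (u b))]

lemma rpow_mul_exp_le_one {q κ : ℝ} (hq : 0 < q) (hκ : 0 ≤ κ) :
    q ^ κ * exp (κ / 2 * (1 - q ^ 2)) ≤ 1 := by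
  have hlog : log (q ^ 2) ≤ q ^ 2 - 1 := log_le_sub_one_of_pos (by positivity)
  rw [log_pow] at hlog
  rw [rpow_def_of_pos hq, ← exp_add, exp_le_one_iff]
  push_cast at hlog
  nlinarith

lemma exists_pos_forall_le_of_eventually_cobounded {E : Type*} [NormedAddCommGroup E]
    [ProperSpace E] {f : E → ℝ} {S : Set E} (hS : IsClosed S) (hf : ContinuousOn f S)
    (hpos : ∀ y ∈ S, 0 < f y) {c : ℝ} (hc : 0 < c) (hfar : ∀ᶠ y in cobounded E, c ≤ f y) :
    ∃ c' > 0, ∀ y ∈ S, c' ≤ f y := by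
  obtain ⟨R, -, hR⟩ := hasBasis_cobounded_norm.eventually_iff.mp hfar
  have hK : IsCompact (S ∩ closedBall 0 R) := (isCompact_closedBall 0 R).inter_left hS
  obtain ⟨a, ha, haK⟩ :=
    hK.exists_forall_le' (hf.mono Set.inter_subset_left) fun y hy => hpos y hy.1
  refine ⟨min c a, lt_min hc ha, fun y hy => ?_⟩
  rcases le_total R ‖y‖ with hyR | hyR
  · exact (min_le_left _ _).trans (hR hyR)
  · exact (min_le_right _ _).trans (haK y ⟨hy, mem_closedBall_zero_iff.mpr hyR⟩)

section LowerBound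

variable {E : Type*} [NormedAddCommGroup E] {u : E → ℝ} {κ c : ℝ}

lemma eventually_cobounded_le_norm_sub_rpow_mul (hκ : 0 ≤ κ) (hpos : ∀ y, 0 < u y)
    (hinf : ∀ᶠ y in cobounded E, c ≤ ‖y‖ ^ κ * u y) (x : E) :
    ∀ᶠ y in cobounded E, 2⁻¹ ^ κ * c ≤ ‖y - x‖ ^ κ * u y := by
  filter_upwards [hinf, tendsto_norm_cobounded_atTop.eventually_ge_atTop (2 * ‖x‖)]
    with y hy hyx
  have hhalf : ‖y‖ / 2 ≤ ‖y - x‖ := by linarith [norm_sub_norm_le y x]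
  calc 2⁻¹ ^ κ * c ≤ 2⁻¹ ^ κ * (‖y‖ ^ κ * u y) := by gcongr
    _ = (‖y‖ / 2) ^ κ * u y := by
      rw [div_eq_mul_inv, mul_rpow (norm_nonneg y) (by norm_num)]; ring
    _ ≤ ‖y - x‖ ^ κ * u y := by gcongr; exact (hpos y).le

lemma exists_pos_le_norm_sub_rpow_mul [ProperSpace E] (hκ : 0 ≤ κ) (hu : Continuous u)
    (hpos : ∀ y, 0 < u y) (hc : 0 < c) (hinf : ∀ᶠ y in cobounded E, c ≤ ‖y‖ ^ κ * u y)
    (x : E) {r : ℝ} (hr : 0 < r) :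
    ∃ c' > 0, ∀ y, r ≤ ‖y - x‖ → c' ≤ ‖y - x‖ ^ κ * u y := by
  have hS : IsClosed {y : E | r ≤ ‖y - x‖} := isClosed_le (by fun_prop) (by fun_prop)
  have hf : Continuous fun y => ‖y - x‖ ^ κ * u y :=
    ((continuous_id.sub continuous_const).norm.rpow_const fun _ => Or.inr hκ).mul hu
  exact exists_pos_forall_le_of_eventually_cobounded hS hf.continuousOn
    (fun y hy => mul_pos (rpow_pos_of_pos (hr.trans_le hy) κ) (hpos y)) (by positivity)
    (eventually_cobounded_le_norm_sub_rpow_mul hκ hpos hinf x)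

end LowerBound

section Kelvin

variable {n : ℕ} {x y : EuclideanSpace ℝ (Fin n)} {l : ℝ}

lemma norm_sphereInversion_sub_center (x : EuclideanSpace ℝ (Fin n)) (l : ℝ)
    (ξ : EuclideanSpace ℝ (Fin n)) : ‖sphereInversion x l ξ - x‖ = l ^ 2 / ‖ξ - x‖ := by
  rw [sphereInversion, add_sub_cancel_left, norm_smul, Real.norm_of_nonneg (by positivity)]
  rcases eq_or_ne ‖ξ - x‖ 0 with h | h
  · simp [h]
  · field_simp

lemma norm_sphereInversion_sub_self (hl : 0 < l) (hly : l ≤ ‖y - x‖) :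
    ‖sphereInversion x l y - y‖ = ‖y - x‖ * (1 - (l / ‖y - x‖) ^ 2) := by
  have hρ : 0 < ‖y - x‖ := hl.trans_le hly
  have hq : (l / ‖y - x‖) ^ 2 ≤ 1 := by
    rw [div_pow, div_le_one (by positivity)]; gcongr
  have hsub : sphereInversion x l y - y = -(1 - (l / ‖y - x‖) ^ 2) • (y - x) := by
    rw [sphereInversion, div_pow]; module
  rw [hsub, norm_smul, norm_neg, Real.norm_of_nonneg (by linarith), mul_comm]

variable {s M : ℝ} {u : EuclideanSpace ℝ (Fin n) → ℝ}

lemma kelvin_le_of_le_mul_exp (hκ : 0 ≤ (n : ℝ) - 2 * s) (hy : 0 ≤ u y)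
    (hlip : ∀ a b, u a ≤ u b * exp (M * ‖a - b‖)) (hl : 0 < l) (hly : l ≤ ‖y - x‖)
    (hMy : M * ‖y - x‖ ≤ ((n : ℝ) - 2 * s) / 2) : kelvin s u x l y ≤ u y := by
  set κ := (n : ℝ) - 2 * s
  set q := l / ‖y - x‖
  have hρ : 0 < ‖y - x‖ := hl.trans_le hly
  have hq : 0 < q := div_pos hl hρ
  have hq1 : 0 ≤ 1 - q ^ 2 := by
    rw [sub_nonneg, div_pow, div_le_one (by positivity)]; gcongr
  calc kelvin s u x l y = q ^ κ * u (sphereInversion x l y) := rfl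
    _ ≤ q ^ κ * (u y * exp (M * (‖y - x‖ * (1 - q ^ 2)))) := by
      gcongr
      rw [← norm_sphereInversion_sub_self hl hly]
      exact hlip _ _
    _ ≤ q ^ κ * (u y * exp (κ / 2 * (1 - q ^ 2))) := by
      gcongr q ^ κ * (u y * exp ?_)
      rw [← mul_assoc]
      exact mul_le_mul_of_nonneg_right hMy hq1
    _ = (q ^ κ * exp (κ / 2 * (1 - q ^ 2))) * u y := by ring
    _ ≤ u y := mul_le_of_le_one_left hy (rpow_mul_exp_le_one hq hκ)

lemma kelvin_le_of_bounds {C c r : ℝ} (hC : ∀ p ∈ closedBall x r, u p ≤ C)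
    (hc : c ≤ ‖y - x‖ ^ ((n : ℝ) - 2 * s) * u y) (hl : 0 < l) (hlr : l ≤ r)
    (hly : l ≤ ‖y - x‖) (hlC : l ^ ((n : ℝ) - 2 * s) * C ≤ c) : kelvin s u x l y ≤ u y := by
  set κ := (n : ℝ) - 2 * s
  have hρ : 0 < ‖y - x‖ := hl.trans_le hly
  have hp : sphereInversion x l y ∈ closedBall x r := by
    rw [mem_closedBall, dist_eq_norm, norm_sphereInversion_sub_center, div_le_iff₀ hρ]
    nlinarith
  calc kelvin s u x l y = (l / ‖y - x‖) ^ κ * u (sphereInversion x l y) := rfl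
    _ ≤ (l / ‖y - x‖) ^ κ * C := by gcongr; exact hC _ hp
    _ = l ^ κ * C / ‖y - x‖ ^ κ := by rw [div_rpow hl.le hρ.le]; ring
    _ ≤ c / ‖y - x‖ ^ κ := by gcongr
    _ ≤ u y := by rw [div_le_iff₀ (by positivity), mul_comm]; exact hc

theorem eventually_kelvin_le (hκ : 0 < (n : ℝ) - 2 * s) (hu : Continuous u)
    (hpos : ∀ y, 0 < u y) (hM : 0 ≤ M) (hlip : ∀ a b, u a ≤ u b * exp (M * ‖a - b‖))
    {c : ℝ} (hc : 0 < c)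
    (hinf : ∀ᶠ y in cobounded _, c ≤ ‖y‖ ^ ((n : ℝ) - 2 * s) * u y)
    (x : EuclideanSpace ℝ (Fin n)) :
    ∀ᶠ l in 𝓝[>] 0, ∀ y, l ≤ ‖y - x‖ → kelvin s u x l y ≤ u y := by
  set κ := (n : ℝ) - 2 * s
  set r := κ / (2 * (M + 1))
  have hr : 0 < r := by positivity
  have hMr : M * r ≤ κ / 2 := by
    calc M * r ≤ (M + 1) * r := by gcongr; linarith
      _ = κ / 2 := by simp only [r]; field_simp
  obtain ⟨c', hc', hfar⟩ := exists_pos_le_norm_sub_rpow_mul hκ.le hu hpos hc hinf x hr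
  obtain ⟨C, hC⟩ := (isCompact_closedBall x r).bddAbove_image hu.continuousOn
  have hsmall : ∀ᶠ l in 𝓝[>] (0 : ℝ), l ^ κ * C < c' := by
    have h0 : Filter.Tendsto (fun l : ℝ => l ^ κ * C) (𝓝 0) (𝓝 (0 ^ κ * C)) :=
      ((continuousAt_rpow_const 0 κ (Or.inr hκ.le)).tendsto).mul_const C
    rw [zero_rpow hκ.ne', zero_mul] at h0
    exact (h0.mono_left nhdsWithin_le_nhds).eventually_lt_const hc'
  filter_upwards [Ioc_mem_nhdsGT hr, hsmall] with l ⟨hl, hlr⟩ hlC y hly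
  rcases le_total ‖y - x‖ r with hyr | hyr
  · exact kelvin_le_of_le_mul_exp hκ.le (hpos y).le hlip hl hly
      ((mul_le_mul_of_nonneg_left hyr hM).trans hMr)
  · exact kelvin_le_of_bounds (fun p hp => hC ⟨p, hp, rfl⟩) (hfar y hyr) hl hlr hly hlC.le

end Kelvin

theorem stmt_8_general (n : ℕ) (s α ε γ σ : ℝ)
    (hns : 2 * s < (n : ℝ))
    (u : EuclideanSpace ℝ (Fin n) → ℝ) (hu : IsIESolution s σ α ε γ u)
    (hu1 : ContDiff ℝ 1 u)
    (hgrad : ∃ M : ℝ, ∀ y, ‖gradient (fun w => Real.log (u w)) y‖ ≤ M)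
    (hinf : ∃ c : ℝ, 0 < c ∧
      ∀ᶠ y in Bornology.cobounded (EuclideanSpace ℝ (Fin n)), c ≤ ‖y‖ ^ ((n : ℝ) - 2 * s) * u y) :
    ∀ x : EuclideanSpace ℝ (Fin n), ∃ l₀ : ℝ, 0 < l₀ ∧
      ∀ l : ℝ, 0 < l → l < l₀ →
        ∀ y : EuclideanSpace ℝ (Fin n), l ≤ ‖y - x‖ → kelvin s u x l y ≤ u y := by
  intro x
  obtain ⟨hcont, hpos, -⟩ := hu
  obtain ⟨M, hM⟩ := hgrad
  obtain ⟨c, hc, hfar⟩ := hinf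
  have hlip := le_mul_exp_of_norm_gradient_log_le (hu1.differentiable one_ne_zero) hpos hM
  have hκ : 0 < (n : ℝ) - 2 * s := by linarith
  obtain ⟨l₀, hl₀, hsmall⟩ := (nhdsGT_basis 0).eventually_iff.mp
    (eventually_kelvin_le hκ hcont hpos ((norm_nonneg _).trans (hM x)) hlip hc hfar x)
  exact ⟨l₀, hl₀, fun l hl hll₀ => hsmall ⟨hl, hll₀⟩⟩

/-- the method of moving spheres can start: for every center `x` there is a
    threshold `λ₀ > 0` below which `u_{x,λ} ≤ u` outside the ball. -/
theorem stmt_8 (n : ℕ) (s α ε γ σ : ℝ)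
    (hs : 0 < 2 * s) (hns : 2 * s < (n : ℝ))
    (hα : 0 < α) (hα' : α ≤ ((n : ℝ) + 2 * s) / ((n : ℝ) - 2 * s))
    (hε : 0 ≤ ε) (hγ : 0 < γ)
    (hσ : σ = ((n : ℝ) + 2 * s) / 2 - α * ((n : ℝ) - 2 * s) / 2)
    (u : EuclideanSpace ℝ (Fin n) → ℝ) (hu : IsIESolution s σ α ε γ u)
    (hu1 : ContDiff ℝ 1 u)
    (hgrad : ∃ M : ℝ, ∀ y, ‖gradient (fun w => Real.log (u w)) y‖ ≤ M)
    (hinf : ∃ c : ℝ, 0 < c ∧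
      ∀ᶠ y in Bornology.cobounded (EuclideanSpace ℝ (Fin n)), c ≤ ‖y‖ ^ ((n : ℝ) - 2 * s) * u y) :
    ∀ x : EuclideanSpace ℝ (Fin n), ∃ l₀ : ℝ, 0 < l₀ ∧
      ∀ l : ℝ, 0 < l → l < l₀ →
        ∀ y : EuclideanSpace ℝ (Fin n), l ≤ ‖y - x‖ → kelvin s u x l y ≤ u y :=
  stmt_8_general n s α ε γ σ hns u hu hu1 hgrad hinf
end

section
/- Let n be an integer and s a real number with n > 2s > 0, and let u : ℝⁿ → ℝ be continuous and satisfy: for every x ∈ ℝⁿ \ {0}, every λ with 0 < λ < |x|, and every y ∈ ℝⁿ with |y − x| ≥ λ, one has (λ/|y − x|)^{n−2s} u(x + λ²(y − x)/|y − x|²) ≤ u(y). Then u is radially symmetric about the origin, i.e. u(y) = u(z) whenever |y| = |z|. -/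
/-!
Given `y ≠ z` with `‖y‖ = ‖z‖`, put the centre `x` on the line through `z` and `y`, beyond `y`.
Since `y` and `z` lie on a common sphere about the origin, `‖x‖² = ‖z‖² + λ²` exactly when the
inversion in the sphere of radius `λ` about `x` maps `z` to `y`. Then `λ < ‖x‖` (as `z ≠ 0`), so
the sphere is admissible, and the hypothesis at the point `z` reads
`(λ / ‖z - x‖)^(n-2s) u(y) ≤ u(z)`. Moving `x` off to infinity lets the ratio `λ / ‖z - x‖` tend
to `1`, whence `u(y) ≤ u(z)`, and by symmetry equality.
-/

open Filter Topology

section InnerProductSpace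

variable {E : Type*} [NormedAddCommGroup E] [InnerProductSpace ℝ E]

lemma inner_sub_eq_neg_half_norm_sub_sq {y z : E} (h : ‖y‖ = ‖z‖) :
    inner ℝ z (y - z) = -(‖y - z‖ ^ 2 / 2) := by
  rw [inner_sub_right, real_inner_self_eq_norm_sq, norm_sub_sq_real, h, real_inner_comm]
  ring

lemma norm_add_smul_sub_sq_of_norm_eq {y z : E} (h : ‖y‖ = ‖z‖) (t : ℝ) :
    ‖z + t • (y - z)‖ ^ 2 = ‖z‖ ^ 2 + t * (t - 1) * ‖y - z‖ ^ 2 := by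
  rw [norm_add_sq_real, real_inner_smul_right, inner_sub_eq_neg_half_norm_sub_sq h, norm_smul,
    mul_pow, Real.norm_eq_abs, sq_abs]
  ring

lemma exists_sphere_inversion_eq {y z : E} (h : ‖y‖ = ‖z‖) (hne : y ≠ z) {r : ℝ}
    (hr₀ : 0 < r) (hr₁ : r < 1) :
    ∃ x : E, ∃ l : ℝ, 0 < l ∧ l < ‖x‖ ∧ l ≤ ‖z - x‖ ∧ l / ‖z - x‖ = r ∧
      x + (l ^ 2 / ‖z - x‖ ^ 2) • (z - x) = y := by
  have hd : 0 < ‖y - z‖ := norm_sub_pos_iff.mpr hne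
  have hz : 0 < ‖z‖ := by
    refine (norm_nonneg z).lt_of_ne fun h0 => hne ?_
    rw [norm_eq_zero.mp h0.symm, ← norm_eq_zero, h, ← h0]
  -- The centre `z + t • (y - z)` with `t (1 - r²) = 1` makes the inversion send `z` to `y`.
  obtain ⟨t, ht, ht₀⟩ : ∃ t : ℝ, t * (1 - r ^ 2) = 1 ∧ 0 < t :=
    ⟨_, inv_mul_cancel₀ (by nlinarith), inv_pos.mpr (by nlinarith)⟩
  have hzx : ‖z - (z + t • (y - z))‖ = t * ‖y - z‖ := by
    rw [sub_add_cancel_left, norm_neg, norm_smul, Real.norm_of_nonneg ht₀.le]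
  refine ⟨z + t • (y - z), r * (t * ‖y - z‖), by positivity, ?_, ?_, ?_, ?_⟩
  · refine pow_lt_pow_iff_left₀ (by positivity) (norm_nonneg _) two_ne_zero |>.mp ?_
    have : t * (t - 1) = (r * t) ^ 2 := by linear_combination t * ht
    rw [norm_add_smul_sub_sq_of_norm_eq h, this]
    nlinarith
  · rw [hzx]; exact mul_le_of_le_one_left (by positivity) hr₁.le
  · rw [hzx]; field_simp
  · have : (r * (t * ‖y - z‖)) ^ 2 / (t * ‖y - z‖) ^ 2 * t = t - 1 := by
      field_simp
      linear_combination -ht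
    rw [hzx, sub_add_cancel_left, smul_neg, smul_smul, this]
    module

lemma le_of_norm_eq_of_forall_inversion_le {u : E → ℝ} {c : ℝ}
    (h : ∀ x : E, x ≠ 0 → ∀ l : ℝ, 0 < l → l < ‖x‖ →
      ∀ y : E, l ≤ ‖y - x‖ →
      (l / ‖y - x‖) ^ c * u (x + (l ^ 2 / ‖y - x‖ ^ 2) • (y - x)) ≤ u y)
    {y z : E} (hyz : ‖y‖ = ‖z‖) : u y ≤ u z := by
  rcases eq_or_ne y z with rfl | hne
  · exact le_rfl
  have hbound : ∀ r ∈ Set.Ioo (0 : ℝ) 1, r ^ c * u y ≤ u z := by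
    rintro r ⟨hr₀, hr₁⟩
    obtain ⟨x, l, hl₀, hlx, hlzx, hratio, hinv⟩ :=
      exists_sphere_inversion_eq hyz hne hr₀ hr₁
    have hx : x ≠ 0 := norm_pos_iff.mp (hl₀.trans hlx)
    simpa only [hratio, hinv] using h x hx l hl₀ hlx z hlzx
  have hlim : Tendsto (fun r : ℝ => r ^ c * u y) (𝓝[<] 1) (𝓝 (u y)) := by
    simpa using ((Real.continuousAt_rpow_const 1 c (Or.inl one_ne_zero)).mul_const
      (u y)).tendsto.mono_left nhdsWithin_le_nhds
  exact le_of_tendsto hlim (mem_of_superset (Ioo_mem_nhdsLT zero_lt_one) hbound)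

end InnerProductSpace

theorem stmt_10_general (n : ℕ) (s : ℝ)
    (u : EuclideanSpace ℝ (Fin n) → ℝ)
    (h : ∀ x : EuclideanSpace ℝ (Fin n), x ≠ 0 →
      ∀ l : ℝ, 0 < l → l < ‖x‖ →
        ∀ y : EuclideanSpace ℝ (Fin n), l ≤ ‖y - x‖ →
          (l / ‖y - x‖) ^ ((n : ℝ) - 2 * s)
              * u (x + (l ^ 2 / ‖y - x‖ ^ 2) • (y - x)) ≤ u y) :
    ∀ y z : EuclideanSpace ℝ (Fin n), ‖y‖ = ‖z‖ → u y = u z := by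
  intro y z hyz
  exact (le_of_norm_eq_of_forall_inversion_le h hyz).antisymm
      (le_of_norm_eq_of_forall_inversion_le h hyz.symm)

/-- if a continuous `u` satisfies the moving-spheres comparison
    `u_{x,λ}(y) ≤ u(y)` for all `x ≠ 0`, `0 < λ < |x|`, `|y − x| ≥ λ`, then `u` is
    radially symmetric about the origin. -/
theorem stmt_10 (n : ℕ) (s : ℝ) (hs : 0 < 2 * s) (hns : 2 * s < (n : ℝ))
    (u : EuclideanSpace ℝ (Fin n) → ℝ) (hu : Continuous u)
    (h : ∀ x : EuclideanSpace ℝ (Fin n), x ≠ 0 →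
      ∀ l : ℝ, 0 < l → l < ‖x‖ →
        ∀ y : EuclideanSpace ℝ (Fin n), l ≤ ‖y - x‖ →
          (l / ‖y - x‖) ^ ((n : ℝ) - 2 * s)
              * u (x + (l ^ 2 / ‖y - x‖ ^ 2) • (y - x)) ≤ u y) :
    ∀ y z : EuclideanSpace ℝ (Fin n), ‖y‖ = ‖z‖ → u y = u z :=
  stmt_10_general n s u h
end

section
/- Let n be an integer and s a real number with n > 2s > 0, and let F : ℝⁿ → ℝ be measurable with |F(y)| ≤ C (1 + |y|²)^{−(n+2s)/2} for all y ∈ ℝⁿ, for some constant C > 0. Then there exists a constant C′ > 0 such that for every x ∈ ℝⁿ with |x| ≥ 2 one has ∫_{ℝⁿ} |x − y|^{2s−n} |F(y)| dy ≤ C′ |x|^{2s−n}. -/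
/-!
Split the integral at the ball `B(x, ρ)`, `ρ = ‖x‖ / 2`. Off this ball the kernel is at most
`ρ ^ (2s - n)`, and the weight `(1 + ‖y‖²) ^ (-(n + 2s) / 2)` is integrable since `n + 2s > n`.
On the ball `‖y‖ ≥ ρ`, so the weight is at most `ρ ^ (-(n + 2s))`, while scaling gives
`∫_{B(x, ρ)} ‖x - y‖ ^ (2s - n) dy = ρ ^ (2s) ∫_{B(0, 1)} ‖z‖ ^ (2s - n) dz`, which is finite
because `2s - n > -n`.
-/

open MeasureTheory Metric Module ENNReal

theorem rpow_neg_one_add_sq_le {ρ t p : ℝ} (hρ : 0 < ρ) (hρt : ρ ≤ t) (hp : 0 ≤ p) :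
    (1 + t ^ 2) ^ (-p / 2) ≤ ρ ^ (-p) := by
  calc (1 + t ^ 2) ^ (-p / 2) ≤ (ρ ^ 2) ^ (-p / 2) :=
        Real.rpow_le_rpow_of_nonpos (by positivity) (by nlinarith) (by linarith)
    _ = ρ ^ (-p) := by
        rw [← Real.rpow_natCast_mul hρ.le]
        ring_nf

theorem setLIntegral_compl_ball_rpow_norm_sub_mul_le {X : Type*} [NormedAddCommGroup X]
    [MeasurableSpace X] [OpensMeasurableSpace X] (μ : Measure X) {a ρ : ℝ} (ha : a ≤ 0)
    (hρ : 0 < ρ) (x : X) (w : X → ℝ) :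
    ∫⁻ y in (ball x ρ)ᶜ, ENNReal.ofReal (‖x - y‖ ^ a * w y) ∂μ
      ≤ ENNReal.ofReal (ρ ^ a) * ∫⁻ y, ENNReal.ofReal (w y) ∂μ := by
  calc ∫⁻ y in (ball x ρ)ᶜ, ENNReal.ofReal (‖x - y‖ ^ a * w y) ∂μ
      ≤ ∫⁻ y in (ball x ρ)ᶜ, ENNReal.ofReal (ρ ^ a) * ENNReal.ofReal (w y) ∂μ := by
        refine setLIntegral_mono' measurableSet_ball.compl fun y hy => ?_
        have hρy : ρ ≤ ‖x - y‖ := by simpa [dist_eq_norm'] using hy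
        rw [ENNReal.ofReal_mul (by positivity)]
        exact mul_le_mul_left
          (ENNReal.ofReal_le_ofReal (Real.rpow_le_rpow_of_nonpos hρ hρy ha)) _
    _ ≤ ∫⁻ y, ENNReal.ofReal (ρ ^ a) * ENNReal.ofReal (w y) ∂μ := setLIntegral_le_lintegral _ _
    _ = ENNReal.ofReal (ρ ^ a) * ∫⁻ y, ENNReal.ofReal (w y) ∂μ :=
        lintegral_const_mul' _ _ ofReal_ne_top

section

variable {E : Type*} [NormedAddCommGroup E] [NormedSpace ℝ E] [FiniteDimensional ℝ E]
  [MeasurableSpace E] [BorelSpace E] (μ : Measure E) [μ.IsAddHaarMeasure]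

theorem lintegral_eq_ofReal_mul_lintegral_comp_smul (f : E → ℝ≥0∞) {r : ℝ} (hr : 0 < r) :
    ∫⁻ x, f x ∂μ = ENNReal.ofReal (r ^ finrank ℝ E) * ∫⁻ x, f (r • x) ∂μ := by
  have hmap : ∫⁻ x, f (r • x) ∂μ = ∫⁻ x, f x ∂(μ.map (r • ·)) :=
    (lintegral_map_equiv f (Homeomorph.smulOfNeZero r hr.ne').toMeasurableEquiv).symm
  rw [hmap, Measure.map_addHaar_smul μ hr.ne', lintegral_smul_measure, smul_eq_mul, ← mul_assoc,
    ← ENNReal.ofReal_mul (by positivity), abs_of_pos (by positivity),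
    mul_inv_cancel₀ (by positivity), ENNReal.ofReal_one, one_mul]

theorem setLIntegral_ball_zero_rpow_norm (a : ℝ) {r : ℝ} (hr : 0 < r) :
    ∫⁻ z in ball 0 r, ENNReal.ofReal (‖z‖ ^ a) ∂μ
      = ENNReal.ofReal (r ^ (finrank ℝ E + a))
          * ∫⁻ z in ball 0 1, ENNReal.ofReal (‖z‖ ^ a) ∂μ := by
  rw [← lintegral_indicator measurableSet_ball, ← lintegral_indicator measurableSet_ball,
    lintegral_eq_ofReal_mul_lintegral_comp_smul μ _ hr, Real.rpow_add hr, Real.rpow_natCast,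
    ENNReal.ofReal_mul (by positivity), mul_assoc]
  congr 1
  rw [← lintegral_const_mul' _ _ ofReal_ne_top]
  refine lintegral_congr fun w => ?_
  have hmem : r • w ∈ ball (0 : E) r ↔ w ∈ ball 0 1 := by
    simp only [mem_ball_zero_iff, norm_smul, Real.norm_of_nonneg hr.le]
    exact mul_lt_iff_lt_one_right hr
  by_cases hw : w ∈ ball (0 : E) 1
  · rw [Set.indicator_of_mem (hmem.2 hw), Set.indicator_of_mem hw, norm_smul,
      Real.norm_of_nonneg hr.le, Real.mul_rpow hr.le (norm_nonneg w),
      ENNReal.ofReal_mul (by positivity)]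
  · rw [Set.indicator_of_notMem (mt hmem.1 hw), Set.indicator_of_notMem hw, mul_zero]

theorem setLIntegral_ball_rpow_norm_sub (x : E) (a r : ℝ) :
    ∫⁻ y in ball x r, ENNReal.ofReal (‖x - y‖ ^ a) ∂μ
      = ∫⁻ z in ball 0 r, ENNReal.ofReal (‖z‖ ^ a) ∂μ := by
  rw [← lintegral_indicator measurableSet_ball, ← lintegral_indicator measurableSet_ball]
  conv_rhs => rw [← lintegral_sub_left_eq_self _ x]
  refine lintegral_congr fun y => ?_
  have hmem : x - y ∈ ball (0 : E) r ↔ y ∈ ball x r := by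
    rw [mem_ball_zero_iff, mem_ball, dist_eq_norm']
  by_cases hy : y ∈ ball x r
  · rw [Set.indicator_of_mem hy, Set.indicator_of_mem (hmem.2 hy)]
  · rw [Set.indicator_of_notMem hy, Set.indicator_of_notMem (mt hmem.1 hy)]

theorem setLIntegral_ball_rpow_norm_lt_top (hd : 1 ≤ finrank ℝ E) {a : ℝ}
    (ha : -(finrank ℝ E : ℝ) < a) (r : ℝ) :
    ∫⁻ z in ball 0 r, ENNReal.ofReal (‖z‖ ^ a) ∂μ < ∞ := by
  refine IntegrableOn.setLIntegral_lt_top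
    (integrableOn_ball_of_norm_le_rpow (C := 1) (α := -a) hd (by linarith) ?_
    (measurable_norm.pow_const a).aestronglyMeasurable)
  refine Filter.Eventually.of_forall fun z => ?_
  rw [neg_neg, one_mul, Real.norm_of_nonneg (by positivity)]

theorem setLIntegral_ball_rpow_norm_sub_mul_le {a p ρ : ℝ} (hp : (finrank ℝ E : ℝ) ≤ p)
    (hρ : 1 ≤ ρ) {x : E} (hx : 2 * ρ ≤ ‖x‖) :
    ∫⁻ y in ball x ρ, ENNReal.ofReal (‖x - y‖ ^ a * (1 + ‖y‖ ^ 2) ^ (-p / 2)) ∂μ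
      ≤ ENNReal.ofReal (ρ ^ a) * ∫⁻ z in ball 0 1, ENNReal.ofReal (‖z‖ ^ a) ∂μ := by
  have hρ0 : 0 < ρ := by linarith
  calc ∫⁻ y in ball x ρ, ENNReal.ofReal (‖x - y‖ ^ a * (1 + ‖y‖ ^ 2) ^ (-p / 2)) ∂μ
      ≤ ∫⁻ y in ball x ρ, ENNReal.ofReal (ρ ^ (-p)) * ENNReal.ofReal (‖x - y‖ ^ a) ∂μ := by
        refine setLIntegral_mono' measurableSet_ball fun y hy => ?_
        have hρy : ρ ≤ ‖y‖ := by
          have := norm_sub_norm_le x y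
          have : ‖x - y‖ < ρ := by simpa [dist_eq_norm'] using hy
          linarith
        rw [mul_comm, ENNReal.ofReal_mul (by positivity)]
        refine mul_le_mul_left (ENNReal.ofReal_le_ofReal (rpow_neg_one_add_sq_le hρ0 hρy ?_)) _
        exact (Nat.cast_nonneg _).trans hp
    _ = ENNReal.ofReal (ρ ^ (-p)) * ∫⁻ y in ball x ρ, ENNReal.ofReal (‖x - y‖ ^ a) ∂μ :=
        lintegral_const_mul' _ _ ofReal_ne_top
    _ = ENNReal.ofReal (ρ ^ (-p) * ρ ^ (finrank ℝ E + a))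
          * ∫⁻ z in ball 0 1, ENNReal.ofReal (‖z‖ ^ a) ∂μ := by
        rw [setLIntegral_ball_rpow_norm_sub, setLIntegral_ball_zero_rpow_norm μ a hρ0, ← mul_assoc,
          ENNReal.ofReal_mul (by positivity)]
    _ ≤ ENNReal.ofReal (ρ ^ a) * ∫⁻ z in ball 0 1, ENNReal.ofReal (‖z‖ ^ a) ∂μ := by
        rw [← Real.rpow_add hρ0]
        exact mul_le_mul_left (ENNReal.ofReal_le_ofReal
          (Real.rpow_le_rpow_of_exponent_le hρ (by linarith))) _

theorem exists_lintegral_rpow_norm_sub_mul_rpow_one_add_norm_sq_le {a p : ℝ}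
    (ha : -(finrank ℝ E : ℝ) < a) (ha0 : a ≤ 0) (hp : (finrank ℝ E : ℝ) < p) :
    ∃ K : ℝ, 0 < K ∧ ∀ x : E, 2 ≤ ‖x‖ →
      ∫⁻ y, ENNReal.ofReal (‖x - y‖ ^ a * (1 + ‖y‖ ^ 2) ^ (-p / 2)) ∂μ
        ≤ ENNReal.ofReal (K * ‖x‖ ^ a) := by
  set I := ∫⁻ y, ENNReal.ofReal ((1 + ‖y‖ ^ 2) ^ (-p / 2)) ∂μ
  set J := ∫⁻ z in ball 0 1, ENNReal.ofReal (‖z‖ ^ a) ∂μ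
  have hd : 1 ≤ finrank ℝ E := by
    have : (0 : ℝ) < finrank ℝ E := by linarith
    exact_mod_cast this
  have hIJ : I + J ≠ ∞ := ENNReal.add_ne_top.2
    ⟨(integrable_rpow_neg_one_add_norm_sq hp).lintegral_lt_top.ne,
      (setLIntegral_ball_rpow_norm_lt_top μ hd ha 1).ne⟩
  refine ⟨2 ^ (-a) * ((I + J).toReal + 1), by positivity, fun x hx => ?_⟩
  set ρ := ‖x‖ / 2 with hρ
  have hρa : ρ ^ a = 2 ^ (-a) * ‖x‖ ^ a := by
    rw [Real.div_rpow (norm_nonneg x) zero_le_two, Real.rpow_neg zero_le_two, div_eq_inv_mul]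
  calc ∫⁻ y, ENNReal.ofReal (‖x - y‖ ^ a * (1 + ‖y‖ ^ 2) ^ (-p / 2)) ∂μ
      = (∫⁻ y in ball x ρ, ENNReal.ofReal (‖x - y‖ ^ a * (1 + ‖y‖ ^ 2) ^ (-p / 2)) ∂μ)
        + ∫⁻ y in (ball x ρ)ᶜ, ENNReal.ofReal (‖x - y‖ ^ a * (1 + ‖y‖ ^ 2) ^ (-p / 2)) ∂μ :=
        (lintegral_add_compl _ measurableSet_ball).symm
    _ ≤ ENNReal.ofReal (ρ ^ a) * J + ENNReal.ofReal (ρ ^ a) * I :=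
        add_le_add (setLIntegral_ball_rpow_norm_sub_mul_le μ hp.le (by linarith) (by linarith))
          (setLIntegral_compl_ball_rpow_norm_sub_mul_le μ ha0 (by linarith) x _)
    _ = ENNReal.ofReal (ρ ^ a) * ENNReal.ofReal (I + J).toReal := by
        rw [ofReal_toReal hIJ, add_comm I, mul_add]
    _ ≤ ENNReal.ofReal (ρ ^ a) * ENNReal.ofReal ((I + J).toReal + 1) := by
        gcongr
        linarith
    _ = ENNReal.ofReal (2 ^ (-a) * ((I + J).toReal + 1) * ‖x‖ ^ a) := by
        rw [← ENNReal.ofReal_mul (by positivity), hρa]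
        ring_nf

end

theorem stmt_12_general (n : ℕ) (s : ℝ) (hs : 0 < 2 * s) (hns : 2 * s < (n : ℝ))
    (F : EuclideanSpace ℝ (Fin n) → ℝ)
    (C : ℝ) (hC : 0 < C)
    (hbound : ∀ y, |F y| ≤ C * (1 + ‖y‖ ^ 2) ^ (-(((n : ℝ) + 2 * s) / 2))) :
    ∃ C' : ℝ, 0 < C' ∧
      ∀ x : EuclideanSpace ℝ (Fin n), 2 ≤ ‖x‖ →
        ∫⁻ y, ENNReal.ofReal (‖x - y‖ ^ (2 * s - (n : ℝ)) * |F y|)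
          ≤ ENNReal.ofReal (C' * ‖x‖ ^ (2 * s - (n : ℝ))) := by
  have hdim : (finrank ℝ (EuclideanSpace ℝ (Fin n)) : ℝ) = n := by
    rw [finrank_euclideanSpace_fin]
  obtain ⟨K, hK, hkernel⟩ :=
    exists_lintegral_rpow_norm_sub_mul_rpow_one_add_norm_sq_le volume
      (a := 2 * s - n) (p := n + 2 * s) (by linarith) (by linarith) (by linarith)
  refine ⟨C * K, by positivity, fun x hx => ?_⟩
  simp only [← neg_div] at hbound
  calc ∫⁻ y, ENNReal.ofReal (‖x - y‖ ^ (2 * s - (n : ℝ)) * |F y|)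
      ≤ ∫⁻ y, ENNReal.ofReal C * ENNReal.ofReal
          (‖x - y‖ ^ (2 * s - (n : ℝ)) * (1 + ‖y‖ ^ 2) ^ (-((n : ℝ) + 2 * s) / 2)) := by
        refine lintegral_mono fun y => ?_
        rw [← ENNReal.ofReal_mul hC.le, mul_left_comm]
        exact ENNReal.ofReal_le_ofReal
          (mul_le_mul_of_nonneg_left (hbound y) (Real.rpow_nonneg (norm_nonneg _) _))
    _ = ENNReal.ofReal C * ∫⁻ y, ENNReal.ofReal
          (‖x - y‖ ^ (2 * s - (n : ℝ)) * (1 + ‖y‖ ^ 2) ^ (-((n : ℝ) + 2 * s) / 2)) :=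
        lintegral_const_mul' _ _ ofReal_ne_top
    _ ≤ ENNReal.ofReal C * ENNReal.ofReal (K * ‖x‖ ^ (2 * s - (n : ℝ))) := by
        gcongr
        exact hkernel x hx
    _ = ENNReal.ofReal (C * K * ‖x‖ ^ (2 * s - (n : ℝ))) := by
        rw [← ENNReal.ofReal_mul hC.le, mul_assoc]

/-- decay of the Riesz potential of a function with decay
    `(1+|y|²)^{−(n+2s)/2}`. -/
theorem stmt_12 (n : ℕ) (s : ℝ) (hs : 0 < 2 * s) (hns : 2 * s < (n : ℝ))
    (F : EuclideanSpace ℝ (Fin n) → ℝ) (hF : Measurable F)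
    (C : ℝ) (hC : 0 < C)
    (hbound : ∀ y, |F y| ≤ C * (1 + ‖y‖ ^ 2) ^ (-(((n : ℝ) + 2 * s) / 2))) :
    ∃ C' : ℝ, 0 < C' ∧
      ∀ x : EuclideanSpace ℝ (Fin n), 2 ≤ ‖x‖ →
        ∫⁻ y, ENNReal.ofReal (‖x - y‖ ^ (2 * s - (n : ℝ)) * |F y|)
          ≤ ENNReal.ofReal (C' * ‖x‖ ^ (2 * s - (n : ℝ))) :=
  stmt_12_general n s hs hns F C hC hbound
end

section
/- Let n be an integer and s a real number with n > 2s > 0, let x ∈ ℝⁿ, and let λ > 0 satisfy λ² ≤ 1 + |x|². Then for every y ∈ ℝⁿ with |y − x| ≥ λ one has (λ/|y − x|)^{n−2s} · (1 + |x + λ²(y − x)/|y − x|²|²)^{−(n−2s)/2} ≤ (1 + |y|²)^{−(n−2s)/2}. Consequently, the standard bubble u(ξ) = C(2/(1+|ξ|²))^{(n−2s)/2} (C > 0 a constant) satisfies u_{x,λ}(y) ≤ u(y) for all |y − x| ≥ λ whenever 0 < λ ≤ √(1+|x|²). -/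
/-!
Write `v = y - x` and `c = λ² / |v|² ≤ 1`, so that the Kelvin image of `y` is `x + c v`. Expanding
both squared norms, `(1 + |x + c v|²) - c (1 + |y|²) = (1 - c) (1 + |x|² - λ²)`, which is
nonnegative exactly because `c ≤ 1` and `λ² ≤ 1 + |x|²`. Raising `c (1 + |y|²) ≤ 1 + |x + c v|²`
to the power `(n - 2s)/2` gives the comparison, and the bubble inequality is a positive multiple
of it.
-/

open Real

theorem mul_one_add_norm_add_sq_le {E : Type*} [NormedAddCommGroup E] [InnerProductSpace ℝ E]
    (x v : E) {c : ℝ} (hc : c ≤ 1) (hcv : c * ‖v‖ ^ 2 ≤ 1 + ‖x‖ ^ 2) :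
    c * (1 + ‖x + v‖ ^ 2) ≤ 1 + ‖x + c • v‖ ^ 2 := by
  have hdiff : 1 + ‖x + c • v‖ ^ 2 - c * (1 + ‖x + v‖ ^ 2)
      = (1 - c) * (1 + ‖x‖ ^ 2 - c * ‖v‖ ^ 2) := by
    rw [norm_add_sq_real, norm_add_sq_real, real_inner_smul_right, norm_smul,
      Real.norm_eq_abs, mul_pow, sq_abs]
    ring
  nlinarith [mul_nonneg (sub_nonneg.2 hc) (sub_nonneg.2 hcv)]

theorem rpow_mul_rpow_neg_half_le {t A B a : ℝ} (ht : 0 ≤ t) (hA : 0 < A) (hB : 0 < B)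
    (ha : 0 ≤ a) (h : t ^ 2 * B ≤ A) :
    t ^ a * A ^ (-(a / 2)) ≤ B ^ (-(a / 2)) := by
  have hta : t ^ a = (t ^ 2) ^ (a / 2) := by
    rw [← Real.rpow_natCast_mul ht]
    ring_nf
  rw [hta, Real.rpow_neg hA.le, Real.rpow_neg hB.le, ← div_eq_mul_inv,
    div_le_iff₀ (by positivity), ← div_eq_inv_mul, le_div_iff₀ (by positivity),
    ← Real.mul_rpow (by positivity) hB.le]
  exact Real.rpow_le_rpow (by positivity) h (by linarith)

section Kelvin

variable {E : Type*} [NormedAddCommGroup E] [InnerProductSpace ℝ E]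
  {x y : E} {l a : ℝ}

theorem kelvin_factor_le (hl : 0 < l) (hl2 : l ^ 2 ≤ 1 + ‖x‖ ^ 2) (hy : l ≤ ‖y - x‖)
    (ha : 0 ≤ a) :
    (l / ‖y - x‖) ^ a * (1 + ‖x + (l ^ 2 / ‖y - x‖ ^ 2) • (y - x)‖ ^ 2) ^ (-(a / 2))
      ≤ (1 + ‖y‖ ^ 2) ^ (-(a / 2)) := by
  have hr : 0 < ‖y - x‖ := hl.trans_le hy
  have hc : l ^ 2 / ‖y - x‖ ^ 2 ≤ 1 :=
    (div_le_one (by positivity)).2 (pow_le_pow_left₀ hl.le hy 2)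
  have hcv : l ^ 2 / ‖y - x‖ ^ 2 * ‖y - x‖ ^ 2 ≤ 1 + ‖x‖ ^ 2 := by
    rwa [div_mul_cancel₀ _ (by positivity)]
  have key := mul_one_add_norm_add_sq_le x (y - x) hc hcv
  rw [add_sub_cancel] at key
  exact rpow_mul_rpow_neg_half_le (by positivity) (by positivity) (by positivity) ha
    (by rwa [div_pow])

theorem kelvin_bubble_le (hl : 0 < l) (hl2 : l ^ 2 ≤ 1 + ‖x‖ ^ 2) (hy : l ≤ ‖y - x‖)
    (ha : 0 ≤ a) {C : ℝ} (hC : 0 ≤ C) :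
    (l / ‖y - x‖) ^ a * (C * (2 / (1 + ‖x + (l ^ 2 / ‖y - x‖ ^ 2) • (y - x)‖ ^ 2)) ^ (a / 2))
      ≤ C * (2 / (1 + ‖y‖ ^ 2)) ^ (a / 2) := by
  have hdiv : ∀ {A : ℝ}, 0 < A → (2 / A) ^ (a / 2) = 2 ^ (a / 2) * A ^ (-(a / 2)) := by
    intro A hA
    rw [Real.div_rpow (by norm_num) hA.le, Real.rpow_neg hA.le, div_eq_mul_inv]
  rw [hdiv (by positivity), hdiv (by positivity)]
  calc _ = C * 2 ^ (a / 2) * ((l / ‖y - x‖) ^ a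
          * (1 + ‖x + (l ^ 2 / ‖y - x‖ ^ 2) • (y - x)‖ ^ 2) ^ (-(a / 2))) := by ring
    _ ≤ C * 2 ^ (a / 2) * (1 + ‖y‖ ^ 2) ^ (-(a / 2)) := by
        gcongr
        exact kelvin_factor_le hl hl2 hy ha
    _ = _ := by ring

end Kelvin

theorem stmt_17_general (n : ℕ) (s : ℝ) (hns : 2 * s < (n : ℝ))
    (x : EuclideanSpace ℝ (Fin n)) (l : ℝ) (hl : 0 < l) (hl2 : l ^ 2 ≤ 1 + ‖x‖ ^ 2) :
    (∀ y : EuclideanSpace ℝ (Fin n), l ≤ ‖y - x‖ →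
      (l / ‖y - x‖) ^ ((n : ℝ) - 2 * s)
          * (1 + ‖x + (l ^ 2 / ‖y - x‖ ^ 2) • (y - x)‖ ^ 2) ^ (-(((n : ℝ) - 2 * s) / 2))
        ≤ (1 + ‖y‖ ^ 2) ^ (-(((n : ℝ) - 2 * s) / 2))) ∧
    (∀ C : ℝ, 0 < C →
      ∀ y : EuclideanSpace ℝ (Fin n), l ≤ ‖y - x‖ →
        (l / ‖y - x‖) ^ ((n : ℝ) - 2 * s)
            * (C * (2 / (1 + ‖x + (l ^ 2 / ‖y - x‖ ^ 2) • (y - x)‖ ^ 2))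
                ^ (((n : ℝ) - 2 * s) / 2))
          ≤ C * (2 / (1 + ‖y‖ ^ 2)) ^ (((n : ℝ) - 2 * s) / 2)) := by
  have ha : 0 ≤ (n : ℝ) - 2 * s := by linarith
  exact ⟨fun y hy => kelvin_factor_le hl hl2 hy ha,
    fun C hC y hy => kelvin_bubble_le hl hl2 hy ha hC.le⟩

/-- for `0 < λ` with `λ² ≤ 1 + |x|²` and `|y − x| ≥ λ`, the bubble-comparison
    inequality holds; consequently the standard bubble `ξ ↦ C (2/(1+|ξ|²))^{(n−2s)/2}`
    dominates its own Kelvin transform outside `B(x,λ)`. -/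
theorem stmt_17 (n : ℕ) (s : ℝ) (hs : 0 < 2 * s) (hns : 2 * s < (n : ℝ))
    (x : EuclideanSpace ℝ (Fin n)) (l : ℝ) (hl : 0 < l) (hl2 : l ^ 2 ≤ 1 + ‖x‖ ^ 2) :
    (∀ y : EuclideanSpace ℝ (Fin n), l ≤ ‖y - x‖ →
      (l / ‖y - x‖) ^ ((n : ℝ) - 2 * s)
          * (1 + ‖x + (l ^ 2 / ‖y - x‖ ^ 2) • (y - x)‖ ^ 2) ^ (-(((n : ℝ) - 2 * s) / 2))
        ≤ (1 + ‖y‖ ^ 2) ^ (-(((n : ℝ) - 2 * s) / 2))) ∧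
    (∀ C : ℝ, 0 < C →
      ∀ y : EuclideanSpace ℝ (Fin n), l ≤ ‖y - x‖ →
        (l / ‖y - x‖) ^ ((n : ℝ) - 2 * s)
            * (C * (2 / (1 + ‖x + (l ^ 2 / ‖y - x‖ ^ 2) • (y - x)‖ ^ 2))
                ^ (((n : ℝ) - 2 * s) / 2))
          ≤ C * (2 / (1 + ‖y‖ ^ 2)) ^ (((n : ℝ) - 2 * s) / 2)) :=
  stmt_17_general n s hns x l hl hl2
end

section
/- Let n be an integer and s a real number with n > 2s > 0, let x ∈ ℝⁿ, λ > 0, and let y ∈ ℝⁿ with |y − x| ≥ λ. Then the inequality (λ/|y − x|)^{n−2s} · (1 + |x + λ²(y − x)/|y − x|²|²)^{−(n−2s)/2} ≤ (1 + |y|²)^{−(n−2s)/2} holds if and only if (λ² − |y − x|²)(λ² − 1 − |x|²) ≥ 0. -/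
open Real

/-!
Write `r = ‖y - x‖`. Raising both sides to the power `-2/(n - 2s)` turns the inequality into
`(λ/r)² (1 + ‖y‖²) ≤ 1 + ‖x + (λ²/r²)(y - x)‖²`, and expanding both norms around `x` shows that
the difference of the two sides is exactly `(λ² - r²)(λ² - 1 - ‖x‖²) / r²`.
-/

theorem one_add_norm_sq_inversion_sub {E : Type*} [NormedAddCommGroup E] [InnerProductSpace ℝ E]
    (x y : E) (l : ℝ) (hxy : y ≠ x) :
    1 + ‖x + (l ^ 2 / ‖y - x‖ ^ 2) • (y - x)‖ ^ 2 - (l / ‖y - x‖) ^ 2 * (1 + ‖y‖ ^ 2)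
      = (l ^ 2 - ‖y - x‖ ^ 2) * (l ^ 2 - 1 - ‖x‖ ^ 2) / ‖y - x‖ ^ 2 := by
  have hr : ‖y - x‖ ≠ 0 := norm_ne_zero_iff.mpr (sub_ne_zero.mpr hxy)
  have hy : ‖y‖ ^ 2 = ‖x‖ ^ 2 + 2 * inner ℝ x (y - x) + ‖y - x‖ ^ 2 := by
    rw [← norm_add_sq_real, add_sub_cancel]
  rw [norm_add_sq_real, real_inner_smul_right, norm_smul, hy, Real.norm_eq_abs, mul_pow, sq_abs]
  field_simp
  ring

theorem rpow_mul_rpow_neg_half_le_rpow_neg_half_iff {a b c p : ℝ} (ha : 0 ≤ a) (hb : 0 < b)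
    (hc : 0 < c) (hp : 0 < p) :
    a ^ p * b ^ (-(p / 2)) ≤ c ^ (-(p / 2)) ↔ a ^ 2 * c ≤ b := by
  have hap : a ^ p = (a ^ 2) ^ (p / 2) := by
    rw [← Real.rpow_natCast, ← Real.rpow_mul ha]
    ring_nf
  rw [hap, Real.rpow_neg hb.le, Real.rpow_neg hc.le, ← div_eq_mul_inv, ← one_div,
    div_le_div_iff₀ (by positivity) (by positivity), one_mul, ← Real.mul_rpow (by positivity) hc.le,
    Real.rpow_le_rpow_iff (by positivity) hb.le (by positivity)]

theorem stmt_18_general (n : ℕ) (s : ℝ) (hns : 2 * s < (n : ℝ))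
    (x : EuclideanSpace ℝ (Fin n)) (l : ℝ) (hl : 0 < l)
    (y : EuclideanSpace ℝ (Fin n)) (hy : l ≤ ‖y - x‖) :
    ((l / ‖y - x‖) ^ ((n : ℝ) - 2 * s)
          * (1 + ‖x + (l ^ 2 / ‖y - x‖ ^ 2) • (y - x)‖ ^ 2) ^ (-(((n : ℝ) - 2 * s) / 2))
        ≤ (1 + ‖y‖ ^ 2) ^ (-(((n : ℝ) - 2 * s) / 2)))
      ↔ 0 ≤ (l ^ 2 - ‖y - x‖ ^ 2) * (l ^ 2 - 1 - ‖x‖ ^ 2) := by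
  have hr : 0 < ‖y - x‖ := hl.trans_le hy
  have hxy : y ≠ x := sub_ne_zero.mp (norm_pos_iff.mp hr)
  rw [rpow_mul_rpow_neg_half_le_rpow_neg_half_iff (by positivity) (by positivity) (by positivity)
    (by linarith), ← sub_nonneg, one_add_norm_sq_inversion_sub x y l hxy,
    le_div_iff₀ (by positivity), zero_mul]

/-- the bubble-comparison inequality holds if and only if
    `(λ² − |y − x|²)(λ² − 1 − |x|²) ≥ 0`. -/
theorem stmt_18 (n : ℕ) (s : ℝ) (hs : 0 < 2 * s) (hns : 2 * s < (n : ℝ))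
    (x : EuclideanSpace ℝ (Fin n)) (l : ℝ) (hl : 0 < l)
    (y : EuclideanSpace ℝ (Fin n)) (hy : l ≤ ‖y - x‖) :
    ((l / ‖y - x‖) ^ ((n : ℝ) - 2 * s)
          * (1 + ‖x + (l ^ 2 / ‖y - x‖ ^ 2) • (y - x)‖ ^ 2) ^ (-(((n : ℝ) - 2 * s) / 2))
        ≤ (1 + ‖y‖ ^ 2) ^ (-(((n : ℝ) - 2 * s) / 2)))
      ↔ 0 ≤ (l ^ 2 - ‖y - x‖ ^ 2) * (l ^ 2 - 1 - ‖x‖ ^ 2) :=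
  stmt_18_general n s hns x l hl y hy
end
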